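/- arXiv:1208.6040 — 2 statements merged into one kernel-verified Lean document; each statement's English description precedes it below -/
import Mathlib

section
/- For the constant function f(x) = 1, the asymmetric generalized translation operator satisfies τ̂_t(f, x) = 1 for all x ∈ (-1, 1) and all t with cos(t/2) ≠ 0. -/
open MeasureTheory Real
open scoped ENNReal NNReal

noncomputable def kerK (x t φ : ℝ) : ℝ :=
  2 * (Real.sqrt (1 - x^2) * Real.cos t + x * Real.sin t * Real.cos φ
        + Real.sqrt (1 - x^2) * (1 - Real.cos t) * (Real.sin φ)^2)^2
    - 1 + (x * Real.cos t - Real.sqrt (1 - x^2) * Real.sin t * Real.cos φ)^2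

noncomputable def genTrans (f : ℝ → ℝ) (t x : ℝ) : ℝ :=
  (1 / (Real.pi * (1 - x^2) * (Real.cos (t/2))^4)) *
    ∫ φ in (0:ℝ)..Real.pi,
      kerK x t φ * f (x * Real.cos t - Real.sqrt (1 - x^2) * Real.sin t * Real.cos φ)

noncomputable def wNorm (p : ℝ≥0∞) (α : ℝ) (f : ℝ → ℝ) : ℝ≥0∞ :=
  eLpNorm (fun x => f x * (1 - x^2) ^ α) p (volume.restrict (Set.Ioo (-1 : ℝ) 1))

def memLpα (p : ℝ≥0∞) (α : ℝ) (f : ℝ → ℝ) : Prop :=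
  MemLp (fun x => f x * (1 - x^2) ^ α) p (volume.restrict (Set.Ioo (-1 : ℝ) 1))

noncomputable def bestApprox (p : ℝ≥0∞) (α : ℝ) (f : ℝ → ℝ) (n : ℕ) : ℝ≥0∞ :=
  ⨅ P : {P : Polynomial ℝ // P.degree < (n : ℕ)},
    wNorm p α (fun x => f x - (P : Polynomial ℝ).eval x)

noncomputable def genModulus (p : ℝ≥0∞) (α : ℝ) (f : ℝ → ℝ) (δ : ℝ) : ℝ≥0∞ :=
  ⨆ t ∈ {t : ℝ | |t| ≤ δ}, wNorm p α (fun x => genTrans f t x - f x)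

def paramOK (p : ℝ≥0∞) (α : ℝ) : Prop :=
  (p = 1 ∧ 1/2 < α ∧ α ≤ 1) ∨
  (1 < p ∧ p < ⊤ ∧ 1 - 1/(2 * p.toReal) < α ∧ α < 3/2 - 1/(2 * p.toReal)) ∨
  (p = ⊤ ∧ 1 ≤ α ∧ α < 3/2)

theorem stmt0 (x t : ℝ) (hx : x ∈ Set.Ioo (-1:ℝ) 1) (ht : Real.cos (t/2) ≠ 0) :
    genTrans (fun _ => (1:ℝ)) t x = 1 := by
  obtain ⟨hx1, hx2⟩ := hx
  have h1x : (0:ℝ) < 1 - x^2 := by nlinarith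
  set s := Real.sqrt (1 - x^2) with hs_def
  have hs : s^2 = 1 - x^2 := Real.sq_sqrt h1x.le
  set ct := Real.cos t with hct
  set st := Real.sin t with hst
  set C0 : ℝ := -1 + 2*s^2 + x^2*ct^2 with hC0
  set C1 : ℝ := 4*x*st*s - 2*x*ct*st*s with hC1
  set C2 : ℝ := -4*s^2 + st^2*s^2 + 4*ct*s^2 + 2*x^2*st^2 with hC2
  set C3 : ℝ := -4*x*st*s + 4*x*ct*st*s with hC3
  set C4 : ℝ := 2*s^2 - 4*ct*s^2 + 2*ct^2*s^2 with hC4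
  have hker : ∀ φ : ℝ, kerK x t φ
      = C0 + C1 * Real.cos φ + C2 * Real.cos φ^2 + C3 * Real.cos φ^3 + C4 * Real.cos φ^4 := by
    intro φ
    unfold kerK
    rw [Real.sin_sq, hC0, hC1, hC2, hC3, hC4, ← hs_def, ← hct, ← hst]
    ring
  have i1 : (∫ φ in (0:ℝ)..Real.pi, Real.cos φ) = 0 := by simp
  have i2 : (∫ φ in (0:ℝ)..Real.pi, Real.cos φ^2) = Real.pi/2 := by
    simp [integral_cos_sq]
  have i3 : (∫ φ in (0:ℝ)..Real.pi, Real.cos φ^3) = 0 := by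
    have h := integral_cos_pow (a := 0) (b := Real.pi) 1
    norm_num at h
    simp
  have i4 : (∫ φ in (0:ℝ)..Real.pi, Real.cos φ^4) = 3*Real.pi/8 := by
    have h := integral_cos_pow (a := 0) (b := Real.pi) 2
    norm_num [i2] at h
    rw [h]; ring
  have ii : ∀ n : ℕ, IntervalIntegrable (fun φ : ℝ => Real.cos φ ^ n) MeasureTheory.volume 0 Real.pi := by
    intro n
    exact ((Real.continuous_cos.pow n)).intervalIntegrable _ _
  have hInt : (∫ φ in (0:ℝ)..Real.pi,
      (C0 + C1 * Real.cos φ + C2 * Real.cos φ^2 + C3 * Real.cos φ^3 + C4 * Real.cos φ^4))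
      = C0 * Real.pi + C2 * (Real.pi/2) + C4 * (3*Real.pi/8) := by
    have hsum : (∫ φ in (0:ℝ)..Real.pi,
        (C0 + C1 * Real.cos φ + C2 * Real.cos φ^2 + C3 * Real.cos φ^3 + C4 * Real.cos φ^4))
        = (∫ _ in (0:ℝ)..Real.pi, C0) + (∫ φ in (0:ℝ)..Real.pi, C1 * Real.cos φ)
          + (∫ φ in (0:ℝ)..Real.pi, C2 * Real.cos φ^2)
          + (∫ φ in (0:ℝ)..Real.pi, C3 * Real.cos φ^3)
          + (∫ φ in (0:ℝ)..Real.pi, C4 * Real.cos φ^4) := by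
      rw [intervalIntegral.integral_add, intervalIntegral.integral_add,
        intervalIntegral.integral_add, intervalIntegral.integral_add] <;>
        apply Continuous.intervalIntegrable <;> fun_prop
    rw [hsum, intervalIntegral.integral_const_mul, intervalIntegral.integral_const_mul,
      intervalIntegral.integral_const_mul, intervalIntegral.integral_const_mul, i1, i2, i3, i4]
    simp
    ring
  have hsin : st^2 = 1 - ct^2 := Real.sin_sq t
  have hu : Real.cos (t/2)^2 = (1 + ct)/2 := by
    rw [hct, Real.cos_sq, show 2*(t/2) = t by ring]; ring
  have key : C0 * Real.pi + C2 * (Real.pi/2) + C4 * (3*Real.pi/8)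
      = Real.pi * (1 - x^2) * Real.cos (t/2)^4 := by
    have h4 : Real.cos (t/2)^4 = ((1 + ct)/2)^2 := by
      rw [show Real.cos (t/2)^4 = (Real.cos (t/2)^2)^2 by ring, hu]
    rw [h4, hC0, hC2, hC4]
    linear_combination (Real.pi*(3/4 + ct/2 + st^2/2 + (3/4)*ct^2)) * hs
      + (Real.pi*(1+x^2)/2) * hsin
  unfold genTrans
  simp only [mul_one]
  rw [show (∫ φ in (0:ℝ)..Real.pi, kerK x t φ)
      = ∫ φ in (0:ℝ)..Real.pi,
        (C0 + C1 * Real.cos φ + C2 * Real.cos φ^2 + C3 * Real.cos φ^3 + C4 * Real.cos φ^4) from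
    intervalIntegral.integral_congr (fun φ _ => hker φ)]
  rw [hInt, key]
  have hπ : Real.pi ≠ 0 := Real.pi_ne_zero
  field_simp
end

section
/- If P is an algebraic polynomial of degree at most n, then for each fixed t, the function x ↦ (1-x²) τ̂_t(P, x) agrees on (-1,1) with an algebraic polynomial in x of degree at most n + 3. -/
open MeasureTheory Real
open scoped ENNReal NNReal

namespace Stmt12Aux

open MvPolynomial

noncomputable def pA (t : ℝ) : MvPolynomial (Fin 3) ℝ :=
  MvPolynomial.C (Real.cos t) * MvPolynomial.X 1
  + MvPolynomial.C (Real.sin t) * MvPolynomial.X 0 * MvPolynomial.X 2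
  + MvPolynomial.C (1 - Real.cos t) * MvPolynomial.X 1 * (1 - (MvPolynomial.X 2)^2)

noncomputable def pB (t : ℝ) : MvPolynomial (Fin 3) ℝ :=
  MvPolynomial.C (Real.cos t) * MvPolynomial.X 0
  - MvPolynomial.C (Real.sin t) * MvPolynomial.X 1 * MvPolynomial.X 2

noncomputable def pG (P : Polynomial ℝ) (t : ℝ) : MvPolynomial (Fin 3) ℝ :=
  (MvPolynomial.C 2 * (pA t)^2 - 1 + (pB t)^2) * (Polynomial.aeval (pB t) P)

lemma eval_aeval (v : Fin 3 → ℝ) (b : MvPolynomial (Fin 3) ℝ) (P : Polynomial ℝ) :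
    MvPolynomial.eval v (Polynomial.aeval b P)
      = Polynomial.eval (MvPolynomial.eval v b) P := by
  have hae : ∀ q : MvPolynomial (Fin 3) ℝ, MvPolynomial.aeval v q = MvPolynomial.eval v q := by
    intro q; rw [MvPolynomial.aeval_def, Algebra.algebraMap_self]; rfl
  have h := Polynomial.aeval_algHom_apply (MvPolynomial.aeval (R := ℝ) v) b P
  rw [hae, hae] at h
  rw [← h, Polynomial.coe_aeval_eq_eval]

lemma eval_pG (P : Polynomial ℝ) (t x y c : ℝ) :
    MvPolynomial.eval ![x, y, c] (pG P t) =
      (2*(y*Real.cos t + x*Real.sin t*c + y*(1-Real.cos t)*(1-c^2))^2 - 1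
        + (x*Real.cos t - y*Real.sin t*c)^2)
        * Polynomial.eval (x*Real.cos t - y*Real.sin t*c) P := by
  have hB : MvPolynomial.eval ![x, y, c] (pB t) = x*Real.cos t - y*Real.sin t*c := by
    simp [pB]; ring
  have haev := eval_aeval ![x, y, c] (pB t) P
  rw [hB] at haev
  simp only [pG, map_mul, haev]
  congr 1
  simp [pA, pB]
  ring

def SB (p : MvPolynomial (Fin 3) ℝ) (k : ℕ) : Prop :=
  ∀ d ∈ p.support, d 0 + d 1 ≤ k

lemma SB.mono {p k l} (h : SB p k) (hkl : k ≤ l) : SB p l :=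
  fun d hd => (h d hd).trans hkl

lemma SB_zero (k : ℕ) : SB 0 k := by simp [SB]

lemma SB_C (a : ℝ) (k : ℕ) : SB (MvPolynomial.C a) k := by
  intro d hd
  have h := MvPolynomial.support_monomial_subset (s := (0 : Fin 3 →₀ ℕ)) (a := a) hd
  simp at h
  simp [h]

lemma SB_one (k : ℕ) : SB 1 k := by
  simpa using SB_C 1 k

lemma SB.add {p q k} (hp : SB p k) (hq : SB q k) : SB (p + q) k := by
  classical
  intro d hd
  rcases Finset.mem_union.mp (MvPolynomial.support_add hd) with h | h
  · exact hp d h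
  · exact hq d h

lemma SB.neg {p k} (hp : SB p k) : SB (-p) k := by
  intro d hd
  rw [MvPolynomial.support_neg] at hd
  exact hp d hd

lemma SB.sub {p q k} (hp : SB p k) (hq : SB q k) : SB (p - q) k := by
  rw [sub_eq_add_neg]; exact hp.add hq.neg

lemma SB.mul {p q k l} (hp : SB p k) (hq : SB q l) : SB (p * q) (k + l) := by
  classical
  intro d hd
  have h := MvPolynomial.support_mul p q hd
  rw [Finset.mem_add] at h
  obtain ⟨a, ha, b, hb, rfl⟩ := h
  have := hp a ha
  have := hq b hb
  simp only [Finsupp.add_apply]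
  omega

lemma SB.pow {p k} (hp : SB p k) (m : ℕ) : SB (p ^ m) (m * k) := by
  induction m with
  | zero => simpa using SB_one 0
  | succ i ih =>
      rw [pow_succ]
      have := ih.mul hp
      simpa [Nat.succ_mul] using this

lemma SB_X0 : SB (MvPolynomial.X 0) 1 := by
  intro d hd
  rw [MvPolynomial.support_X] at hd
  simp at hd
  simp [hd, Finsupp.single_apply]

lemma SB_X1 : SB (MvPolynomial.X 1) 1 := by
  intro d hd
  rw [MvPolynomial.support_X] at hd
  simp at hd
  simp [hd, Finsupp.single_apply]

lemma SB_X2 : SB (MvPolynomial.X 2) 0 := by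
  intro d hd
  rw [MvPolynomial.support_X] at hd
  simp at hd
  simp [hd, Finsupp.single_apply]

lemma SB.sum {α : Type*} {s : Finset α} {f : α → MvPolynomial (Fin 3) ℝ} {k : ℕ}
    (h : ∀ i ∈ s, SB (f i) k) : SB (∑ i ∈ s, f i) k := by
  classical
  induction s using Finset.induction_on with
  | empty => simpa using SB_zero k
  | insert _ _ hni ih =>
      rw [Finset.sum_insert hni]
      exact (h _ (Finset.mem_insert_self _ _)).add
        (ih fun i hi => h i (Finset.mem_insert_of_mem hi))

lemma SB_pA (t : ℝ) : SB (pA t) 1 := by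
  have h1 : SB (MvPolynomial.C (Real.cos t) * MvPolynomial.X (1 : Fin 3)) 1 := by
    simpa using (SB_C (Real.cos t) 0).mul SB_X1
  have h2 : SB (MvPolynomial.C (Real.sin t) * MvPolynomial.X (0 : Fin 3)
      * MvPolynomial.X (2 : Fin 3)) 1 := by
    simpa using ((SB_C (Real.sin t) 0).mul SB_X0).mul SB_X2
  have h3 : SB (MvPolynomial.C (1 - Real.cos t) * MvPolynomial.X (1 : Fin 3)
      * (1 - (MvPolynomial.X (2 : Fin 3))^2)) 1 := by
    have hX22 : SB ((MvPolynomial.X (2 : Fin 3) : MvPolynomial (Fin 3) ℝ)^2) 0 := by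
      simpa using SB_X2.pow 2
    simpa using ((SB_C (1 - Real.cos t) 0).mul SB_X1).mul ((SB_one 0).sub hX22)
  exact (h1.add h2).add h3

lemma SB_pB (t : ℝ) : SB (pB t) 1 := by
  have h1 : SB (MvPolynomial.C (Real.cos t) * MvPolynomial.X (0 : Fin 3)) 1 := by
    simpa using (SB_C (Real.cos t) 0).mul SB_X0
  have h2 : SB (MvPolynomial.C (Real.sin t) * MvPolynomial.X (1 : Fin 3)
      * MvPolynomial.X (2 : Fin 3)) 1 := by
    simpa using ((SB_C (Real.sin t) 0).mul SB_X1).mul SB_X2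
  exact h1.sub h2

lemma SB_aeval {P : Polynomial ℝ} {n : ℕ} (hP : P.natDegree ≤ n) (t : ℝ) :
    SB (Polynomial.aeval (pB t) P) n := by
  rw [Polynomial.aeval_eq_sum_range' (Nat.lt_succ_of_le hP)]
  apply SB.sum
  intro i hi
  rw [Finset.mem_range] at hi
  have : SB (MvPolynomial.C (P.coeff i) * (pB t) ^ i) n := by
    have := (SB_C (P.coeff i) 0).mul ((SB_pB t).pow i)
    simpa using this.mono (by omega)
  simpa [MvPolynomial.smul_eq_C_mul] using this

lemma SB_pG {P : Polynomial ℝ} {n : ℕ} (hP : P.natDegree ≤ n) (t : ℝ) :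
    SB (pG P t) (n + 2) := by
  have hker : SB (MvPolynomial.C 2 * (pA t)^2 - 1 + (pB t)^2) 2 := by
    have h1 : SB (MvPolynomial.C (2:ℝ) * (pA t)^2) 2 := by
      simpa using (SB_C 2 0).mul ((SB_pA t).pow 2)
    have h2 : SB ((pB t)^2) 2 := by simpa using (SB_pB t).pow 2
    exact (h1.sub (SB_one 2)).add h2
  have := hker.mul (SB_aeval hP t)
  simpa [pG, Nat.add_comm] using this

end Stmt12Aux

theorem stmt12 (P : Polynomial ℝ) (n : ℕ) (hP : P.natDegree ≤ n) (t : ℝ) :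
    ∃ Q : Polynomial ℝ, Q.natDegree ≤ n + 3 ∧
      ∀ x ∈ Set.Ioo (-1:ℝ) 1,
        (1 - x^2) * genTrans (fun y => P.eval y) t x = Q.eval x := by
  classical
  set G := Stmt12Aux.pG P t with hG
  set m : ℕ → ℝ := fun j => ∫ φ in (0:ℝ)..Real.pi, Real.cos φ ^ j with hm
  set Q0 : Polynomial ℝ := ∑ d ∈ G.support,
      Polynomial.C (G.coeff d * m (d 2)) * Polynomial.X ^ (d 0) *
        (if Even (d 1) then (1 - Polynomial.X^2)^((d 1)/2) else 0) with hQ0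
  refine ⟨Polynomial.C (1/(Real.pi * Real.cos (t/2)^4)) * Q0, ?_, ?_⟩
  · -- degree bound
    refine le_trans (Polynomial.natDegree_mul_le) ?_
    rw [Polynomial.natDegree_C, zero_add]
    apply Polynomial.natDegree_sum_le_of_forall_le
    intro d hd
    have hsb := Stmt12Aux.SB_pG hP t d hd
    refine le_trans (Polynomial.natDegree_mul_le) ?_
    have h1 : (Polynomial.C (G.coeff d * m (d 2)) * Polynomial.X ^ (d 0)).natDegree ≤ d 0 := by
      refine le_trans (Polynomial.natDegree_mul_le) ?_
      rw [Polynomial.natDegree_C, Polynomial.natDegree_X_pow]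
      omega
    have h2 : ((if Even (d 1) then ((1 : Polynomial ℝ) - Polynomial.X^2)^((d 1)/2)
        else 0)).natDegree ≤ d 1 := by
      split
      · refine le_trans (Polynomial.natDegree_pow_le) ?_
        have : ((1 : Polynomial ℝ) - Polynomial.X^2).natDegree ≤ 2 := by
          refine le_trans (Polynomial.natDegree_sub_le _ _) ?_
          simp [Polynomial.natDegree_one, Polynomial.natDegree_X_pow]
        calc (d 1)/2 * ((1 : Polynomial ℝ) - Polynomial.X^2).natDegree
            ≤ (d 1)/2 * 2 := Nat.mul_le_mul_left _ this
          _ ≤ d 1 := by omega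
      · simp
    omega
  · -- evaluation
    rintro x ⟨hx1, hx2⟩
    have hx2' : (0:ℝ) < 1 - x^2 := by nlinarith
    set s : ℝ := Real.sqrt (1 - x^2) with hs
    have hs2 : s^2 = 1 - x^2 := Real.sq_sqrt hx2'.le
    have hIsum : ∀ y : ℝ, (∫ φ in (0:ℝ)..Real.pi, MvPolynomial.eval ![x, y, Real.cos φ] G)
        = ∑ d ∈ G.support, G.coeff d * (x ^ d 0 * y ^ d 1) * m (d 2) := by
      intro y
      have hintegrand : ∀ φ : ℝ, MvPolynomial.eval ![x, y, Real.cos φ] G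
          = ∑ d ∈ G.support, (G.coeff d * (x ^ d 0 * y ^ d 1)) * Real.cos φ ^ d 2 := by
        intro φ
        rw [MvPolynomial.eval_eq']
        apply Finset.sum_congr rfl
        intro d _
        rw [Fin.prod_univ_three]
        simp only [Matrix.cons_val_zero, Matrix.cons_val_one, Matrix.head_cons,
          Matrix.cons_val_two, Matrix.tail_cons]
        ring
      simp only [hintegrand]
      rw [intervalIntegral.integral_finset_sum]
      · apply Finset.sum_congr rfl
        intro d _
        rw [intervalIntegral.integral_const_mul]
      · intro d _
        apply Continuous.intervalIntegrable
        fun_prop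
    have hpar : ∀ y c : ℝ, MvPolynomial.eval ![x, y, -c] G
        = MvPolynomial.eval ![x, -y, c] G := by
      intro y c
      rw [hG, Stmt12Aux.eval_pG, Stmt12Aux.eval_pG]
      have harg : x*Real.cos t - y*Real.sin t*(-c) = x*Real.cos t - (-y)*Real.sin t*c := by
        ring
      rw [harg]
      ring
    have hflip : (∫ φ in (0:ℝ)..Real.pi, MvPolynomial.eval ![x, s, Real.cos φ] G)
        = ∫ φ in (0:ℝ)..Real.pi, MvPolynomial.eval ![x, -s, Real.cos φ] G := by
      have hcs := intervalIntegral.integral_comp_sub_left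
        (fun φ => MvPolynomial.eval ![x, s, Real.cos φ] G) Real.pi (a := 0) (b := Real.pi)
      simp only [sub_self, sub_zero] at hcs
      rw [← hcs]
      apply intervalIntegral.integral_congr
      intro φ _
      simp only [Real.cos_pi_sub, hpar]
    have key : (∫ φ in (0:ℝ)..Real.pi, MvPolynomial.eval ![x, s, Real.cos φ] G)
        = Q0.eval x := by
      have h2 : (∫ φ in (0:ℝ)..Real.pi, MvPolynomial.eval ![x, s, Real.cos φ] G)
          = ((∫ φ in (0:ℝ)..Real.pi, MvPolynomial.eval ![x, s, Real.cos φ] G)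
            + ∫ φ in (0:ℝ)..Real.pi, MvPolynomial.eval ![x, -s, Real.cos φ] G)/2 := by
        rw [← hflip]; ring
      rw [hQ0, Polynomial.eval_finset_sum, h2, hIsum s, hIsum (-s),
        ← Finset.sum_add_distrib, Finset.sum_div]
      apply Finset.sum_congr rfl
      intro d _
      simp only [Polynomial.eval_mul, Polynomial.eval_C, Polynomial.eval_pow,
        Polynomial.eval_X]
      by_cases hev : Even (d 1)
      · have hneg : (-s) ^ (d 1) = s ^ (d 1) := hev.neg_pow s
        rw [if_pos hev, hneg]
        have hpow : s ^ (d 1) = (1 - x^2) ^ ((d 1) / 2) := by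
          obtain ⟨k, hk⟩ := hev
          have hk2 : d 1 / 2 = k := by omega
          rw [hk2, ← hs2, ← pow_mul]
          congr 1
          omega
        rw [hpow]
        simp only [Polynomial.eval_sub, Polynomial.eval_pow, Polynomial.eval_one,
          Polynomial.eval_X]
        ring
      · have hodd : Odd (d 1) := Nat.not_even_iff_odd.mp hev
        rw [if_neg hev, hodd.neg_pow]
        simp only [Polynomial.eval_zero]
        ring
    have hker : (∫ φ in (0:ℝ)..Real.pi, kerK x t φ *
        Polynomial.eval (x * Real.cos t - Real.sqrt (1 - x^2) * Real.sin t * Real.cos φ) P)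
        = ∫ φ in (0:ℝ)..Real.pi, MvPolynomial.eval ![x, s, Real.cos φ] G := by
      apply intervalIntegral.integral_congr
      intro φ _
      show kerK x t φ * Polynomial.eval
          (x * Real.cos t - Real.sqrt (1 - x^2) * Real.sin t * Real.cos φ) P
        = MvPolynomial.eval ![x, s, Real.cos φ] G
      rw [hG, Stmt12Aux.eval_pG]
      simp only [kerK, ← hs, Real.sin_sq]
    have hscal : (1 - x^2) * (1 / (Real.pi * (1 - x^2) * Real.cos (t/2)^4))
        = 1 / (Real.pi * Real.cos (t/2)^4) := by
      by_cases hc : Real.cos (t/2) = 0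
      · simp [hc]
      · field_simp
    simp only [genTrans, Polynomial.eval_mul, Polynomial.eval_C]
    rw [← mul_assoc, hscal, hker, key]
end
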